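/- arXiv:1311.0245 — 3 statements merged into one kernel-verified Lean document; each statement's English description precedes it below -/
import Mathlib

section
/- The function d(x,y) = |x-y| + |Θ₀(x,y)_N|^{1/2} satisfies an approximate symmetry: there exist constants c, C > 0 such that c·d(y,x) ≤ d(x,y) ≤ C·d(y,x) for all x, y ∈ ℝ^N. -/
open scoped BigOperators

/-- Euclidean norm on `Fin m → ℝ`. -/
noncomputable def euclN {m : ℕ} (x : Fin m → ℝ) : ℝ := Real.sqrt (∑ i, (x i) ^ 2)

/-- `Θ₀(x,y)_i = Σ_j B_j^i(x)(x^j - y^j)`, where `B x i j = B_j^i(x)`. -/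
noncomputable def Theta (d : ℕ) (B : (Fin (d+1) → ℝ) → Fin (d+1) → Fin (d+1) → ℝ)
    (x y : Fin (d+1) → ℝ) (i : Fin (d+1)) : ℝ :=
  ∑ j, B x i j * (x j - y j)

/-- The quasi-distance `d(x,y) = |x-y| + |Θ₀(x,y)_N|^{1/2}`. -/
noncomputable def dq (d : ℕ) (B : (Fin (d+1) → ℝ) → Fin (d+1) → Fin (d+1) → ℝ)
    (x y : Fin (d+1) → ℝ) : ℝ :=
  euclN (x - y) + Real.sqrt |Theta d B x y (Fin.last d)|

lemma euclN_nonneg {m : ℕ} (x : Fin m → ℝ) : 0 ≤ euclN x := Real.sqrt_nonneg _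

lemma euclN_neg' {m : ℕ} (x y : Fin m → ℝ) : euclN (x - y) = euclN (y - x) := by
  unfold euclN
  congr 1
  apply Finset.sum_congr rfl
  intro i _
  simp [Pi.sub_apply]
  ring

lemma abs_le_euclN {m : ℕ} (x : Fin m → ℝ) (i : Fin m) : |x i| ≤ euclN x := by
  rw [← Real.sqrt_sq_eq_abs]
  exact Real.sqrt_le_sqrt (Finset.single_le_sum (f := fun j => (x j) ^ 2)
    (fun j _ => sq_nonneg _) (Finset.mem_univ i))

lemma sqrt_add_le' (a b : ℝ) (ha : 0 ≤ a) (hb : 0 ≤ b) :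
    Real.sqrt (a + b) ≤ Real.sqrt a + Real.sqrt b := by
  have h : a + b ≤ (Real.sqrt a + Real.sqrt b) ^ 2 := by
    nlinarith [Real.sq_sqrt ha, Real.sq_sqrt hb, Real.sqrt_nonneg a, Real.sqrt_nonneg b]
  calc Real.sqrt (a + b) ≤ Real.sqrt ((Real.sqrt a + Real.sqrt b) ^ 2) := Real.sqrt_le_sqrt h
    _ = Real.sqrt a + Real.sqrt b := Real.sqrt_sq (by positivity)

/-- approximate symmetry of `d(x,y)`. -/
theorem dq_approx_symm (d : ℕ)
    (B : (Fin (d+1) → ℝ) → Fin (d+1) → Fin (d+1) → ℝ)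
    (hB_smooth : ∀ i j, ContDiff ℝ (⊤ : ℕ∞) (fun x => B x i j))
    (hB_bdd : ∀ (i j : Fin (d+1)) (k : ℕ), ∃ Ck : ℝ, ∀ x,
      ‖iteratedFDeriv ℝ k (fun x => B x i j) x‖ ≤ Ck)
    (hB_det : ∃ c₀ : ℝ, 0 < c₀ ∧ ∀ x, c₀ ≤ |(Matrix.of (B x)).det|) :
    ∃ c C : ℝ, 0 < c ∧ 0 < C ∧ ∀ x y : Fin (d+1) → ℝ,
      c * dq d B y x ≤ dq d B x y ∧ dq d B x y ≤ C * dq d B y x := by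
  classical
  set N := Fin.last d
  -- For each j, get a Lipschitz constant for x ↦ B x N j
  have hLip : ∀ j : Fin (d+1), ∃ K : ℝ, 0 ≤ K ∧ ∀ x y : Fin (d+1) → ℝ,
      |B x N j - B y N j| ≤ K * ‖x - y‖ := by
    intro j
    obtain ⟨Ck, hCk⟩ := hB_bdd N j 1
    have hCk0 : 0 ≤ Ck := le_trans (norm_nonneg _) (hCk 0)
    refine ⟨Ck, hCk0, fun x y => ?_⟩
    have hdiff : Differentiable ℝ (fun x => B x N j) :=
      (hB_smooth N j).differentiable (by simp)
    have hb : ∀ z, ‖fderiv ℝ (fun x => B x N j) z‖ ≤ Ck := by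
      intro z
      apply ContinuousLinearMap.opNorm_le_bound _ hCk0
      intro v
      have := (iteratedFDeriv ℝ 1 (fun x => B x N j) z).le_opNorm (fun _ => v)
      rw [iteratedFDeriv_one_apply] at this
      calc ‖fderiv ℝ (fun x => B x N j) z v‖
          ≤ ‖iteratedFDeriv ℝ 1 (fun x => B x N j) z‖ * ∏ _i : Fin 1, ‖v‖ := this
        _ ≤ Ck * ‖v‖ := by
            simp only [Finset.prod_const, Finset.card_univ, Fintype.card_fin, pow_one]
            exact mul_le_mul_of_nonneg_right (hCk z) (norm_nonneg _)
    have := Convex.norm_image_sub_le_of_norm_fderiv_le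
      (fun z _ => hdiff.differentiableAt) (fun z _ => hb z)
      (convex_univ) (Set.mem_univ y) (Set.mem_univ x)
    simpa [Real.norm_eq_abs] using this
  choose K hK0 hKlip using hLip
  set M : ℝ := ∑ j, K j with hM
  have hM0 : 0 ≤ M := Finset.sum_nonneg fun j _ => hK0 j
  set C : ℝ := 1 + Real.sqrt M with hC
  have hsq0 : 0 ≤ Real.sqrt M := Real.sqrt_nonneg _
  have hC1 : (1:ℝ) ≤ C := by simp [hC, hsq0]
  have hC0 : 0 < C := lt_of_lt_of_le one_pos hC1
  -- key: one-sided inequality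
  have key : ∀ x y : Fin (d+1) → ℝ, dq d B x y ≤ C * dq d B y x := by
    intro x y
    set e : ℝ := euclN (x - y) with he
    have he0 : 0 ≤ e := euclN_nonneg _
    -- component bound : |x j - y j| ≤ e  and ‖x - y‖ ≤ e
    have hcomp : ∀ j, |x j - y j| ≤ e := by
      intro j
      have := abs_le_euclN (x - y) j
      simpa [Pi.sub_apply] using this
    have hnorm : ‖x - y‖ ≤ e := by
      rw [pi_norm_le_iff_of_nonneg he0]
      intro j
      simpa [Real.norm_eq_abs, Pi.sub_apply] using hcomp j
    -- Theta sum identity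
    have hsum : Theta d B x y N + Theta d B y x N
        = ∑ j, (B x N j - B y N j) * (x j - y j) := by
      unfold Theta
      rw [← Finset.sum_add_distrib]
      apply Finset.sum_congr rfl
      intro j _
      ring
    have hsumbd : |∑ j, (B x N j - B y N j) * (x j - y j)| ≤ M * e ^ 2 := by
      calc |∑ j, (B x N j - B y N j) * (x j - y j)|
          ≤ ∑ j, |(B x N j - B y N j) * (x j - y j)| := Finset.abs_sum_le_sum_abs _ _
        _ ≤ ∑ j, K j * e ^ 2 := by
            apply Finset.sum_le_sum
            intro j _
            rw [abs_mul]
            have h1 : |B x N j - B y N j| ≤ K j * e :=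
              le_trans (hKlip j x y) (mul_le_mul_of_nonneg_left hnorm (hK0 j))
            have h2 : |x j - y j| ≤ e := hcomp j
            calc |B x N j - B y N j| * |x j - y j| ≤ (K j * e) * e :=
                  mul_le_mul h1 h2 (abs_nonneg _) (mul_nonneg (hK0 j) he0)
              _ = K j * e ^ 2 := by ring
        _ = M * e ^ 2 := by rw [hM, Finset.sum_mul]
    have hTheta : |Theta d B x y N| ≤ |Theta d B y x N| + M * e ^ 2 := by
      have : Theta d B x y N = (∑ j, (B x N j - B y N j) * (x j - y j)) - Theta d B y x N := by
        linarith [hsum]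
      rw [this]
      calc |(∑ j, (B x N j - B y N j) * (x j - y j)) - Theta d B y x N|
          ≤ |∑ j, (B x N j - B y N j) * (x j - y j)| + |Theta d B y x N| := abs_sub _ _
        _ ≤ |Theta d B y x N| + M * e ^ 2 := by linarith
    -- sqrt bound
    have hsqrt : Real.sqrt |Theta d B x y N|
        ≤ Real.sqrt |Theta d B y x N| + Real.sqrt M * e := by
      calc Real.sqrt |Theta d B x y N|
          ≤ Real.sqrt (|Theta d B y x N| + M * e ^ 2) := Real.sqrt_le_sqrt hTheta
        _ ≤ Real.sqrt |Theta d B y x N| + Real.sqrt (M * e ^ 2) :=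
            sqrt_add_le' _ _ (abs_nonneg _) (mul_nonneg hM0 (sq_nonneg _))
        _ = Real.sqrt |Theta d B y x N| + Real.sqrt M * e := by
            rw [Real.sqrt_mul hM0, Real.sqrt_sq he0]
    have he' : euclN (y - x) = e := (euclN_neg' y x).trans he.symm
    have hs0 : 0 ≤ Real.sqrt |Theta d B y x N| := Real.sqrt_nonneg _
    unfold dq
    rw [he']
    rw [← he]
    calc e + Real.sqrt |Theta d B x y N|
        ≤ e + (Real.sqrt |Theta d B y x N| + Real.sqrt M * e) := by linarith
      _ ≤ C * (e + Real.sqrt |Theta d B y x N|) := by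
          rw [hC]; nlinarith
  refine ⟨1 / C, C, by positivity, hC0, fun x y => ?_⟩
  constructor
  · rw [div_mul_eq_mul_div, one_mul, div_le_iff₀ hC0, mul_comm]
    exact key y x
  · exact key x y
end

section
/- Characterization of non-isotropic Lipschitz spaces via dyadic decompositions (one direction): if f = Σ_{k=0}^∞ f_k with ‖∂_x^γ X'^λ f_k‖_{L^∞} ≤ C 2^{k(2|γ|+|λ|-α)} for all k ≥ 0 and all multiindices with 0 ≤ |γ|+|λ| ≤ α+1, then f ∈ Γ^α with ‖f‖_{Γ^α} ≲ C. In the model case (0 < α < 1, D = D⁰ on ℝ^{N-1}×ℝ, d(x,y) = |x'-y'|+|x_N-y_N|^{1/2}): if f = Σ_k f_k with ‖f_k‖_∞ ≤ C2^{-kα}, ‖∇_{x'} f_k‖_∞ ≤ C2^{k(1-α)}, ‖∂_{x_N} f_k‖_∞ ≤ C2^{k(2-α)}, then |f(x)-f(y)| ≤ C' d(x,y)^α for all x, y. -/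
open scoped BigOperators

/-- Model non-isotropic quasi-distance `d(x,y) = |x'-y'| + |x_N - y_N|^{1/2}`. -/
noncomputable def dm (d : ℕ) (x y : Fin (d+1) → ℝ) : ℝ :=
  Real.sqrt (∑ i : Fin d, (x i.castSucc - y i.castSucc) ^ 2) +
    Real.sqrt |x (Fin.last d) - y (Fin.last d)|

/-!
Write `D = d(x,y)` and let `K` be the first dyadic scale with `2^K D ≥ 1`. For the low frequencies
`k < K` the mean value theorem bounds `|f_k x - f_k y|` by `2^{k(1-α)} D + 2^{k(2-α)} D²`, since
`|x' - y'| ≤ D` and `|x_N - y_N| ≤ D²`; these are increasing geometric series dominated by their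
last term, which is `≲ D^α`. For the high frequencies `k ≥ K` the sup bound `2^{-kα}` gives a
decreasing geometric series dominated by its first term `2^{-Kα} ≤ D^α`.
-/

open Finset

theorem abs_sub_le_sum_mul_abs_of_abs_fderiv_single_le {ι : Type*} [Fintype ι] [DecidableEq ι]
    {g : (ι → ℝ) → ℝ} (hg : Differentiable ℝ g) {B : ι → ℝ}
    (hB : ∀ w i, |fderiv ℝ g w (Pi.single i 1)| ≤ B i) (x y : ι → ℝ) :
    |g x - g y| ≤ ∑ i, B i * |x i - y i| := by
  have hderiv (w : ι → ℝ) : |fderiv ℝ g w (x - y)| ≤ ∑ i, B i * |x i - y i| := by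
    have hexpand : fderiv ℝ g w (x - y) = ∑ i, (x i - y i) * fderiv ℝ g w (Pi.single i 1) := by
      conv_lhs => rw [← univ_sum_single (x - y)]
      simp only [map_sum, Pi.sub_apply]
      refine sum_congr rfl fun i _ => ?_
      rw [← smul_eq_mul, ← map_smul, ← Pi.single_smul', smul_eq_mul, mul_one]
    rw [hexpand]
    refine (abs_sum_le_sum_abs _ _).trans (sum_le_sum fun i _ => ?_)
    rw [abs_mul, mul_comm]
    exact mul_le_mul_of_nonneg_right (hB w i) (abs_nonneg _)
  have hsegment (t : ℝ) : HasDerivAt (fun s : ℝ => g (y + s • (x - y)))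
      (fderiv ℝ g (y + t • (x - y)) (x - y)) t := by
    refine (hg _).hasFDerivAt.comp_hasDerivAt t ?_
    simpa using ((hasDerivAt_id t).smul_const (x - y)).const_add y
  simpa using norm_image_sub_le_of_norm_deriv_le_segment_01'
    (fun t _ => (hsegment t).hasDerivWithinAt) (fun t _ => hderiv _)

theorem dm_nonneg (d : ℕ) (x y : Fin (d+1) → ℝ) : 0 ≤ dm d x y := by
  unfold dm; positivity

theorem abs_sub_castSucc_le_dm {d : ℕ} (x y : Fin (d+1) → ℝ) (i : Fin d) :
    |x i.castSucc - y i.castSucc| ≤ dm d x y := by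
  have hi : |x i.castSucc - y i.castSucc|
      ≤ Real.sqrt (∑ j : Fin d, (x j.castSucc - y j.castSucc) ^ 2) := by
    rw [← Real.sqrt_sq_eq_abs]
    exact Real.sqrt_le_sqrt (single_le_sum (f := fun j : Fin d => (x j.castSucc - y j.castSucc) ^ 2)
      (fun j _ => sq_nonneg _) (mem_univ i))
  unfold dm
  linarith [Real.sqrt_nonneg |x (Fin.last d) - y (Fin.last d)|]

theorem abs_sub_last_le_dm_sq {d : ℕ} (x y : Fin (d+1) → ℝ) :
    |x (Fin.last d) - y (Fin.last d)| ≤ dm d x y ^ 2 := by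
  have hle : Real.sqrt |x (Fin.last d) - y (Fin.last d)| ≤ dm d x y := by
    unfold dm; linarith [Real.sqrt_nonneg (∑ i : Fin d, (x i.castSucc - y i.castSucc) ^ 2)]
  calc |x (Fin.last d) - y (Fin.last d)| = Real.sqrt |x (Fin.last d) - y (Fin.last d)| ^ 2 :=
        (Real.sq_sqrt (abs_nonneg _)).symm
    _ ≤ dm d x y ^ 2 := pow_le_pow_left₀ (Real.sqrt_nonneg _) hle 2

theorem abs_sub_le_dm_of_abs_fderiv_single_le {d : ℕ} {g : (Fin (d+1) → ℝ) → ℝ}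
    (hg : Differentiable ℝ g) {B₁ B₂ : ℝ}
    (hB₁ : ∀ w (i : Fin d), |fderiv ℝ g w (Pi.single i.castSucc 1)| ≤ B₁)
    (hB₂ : ∀ w, |fderiv ℝ g w (Pi.single (Fin.last d) 1)| ≤ B₂) (x y : Fin (d+1) → ℝ) :
    |g x - g y| ≤ d * B₁ * dm d x y + B₂ * dm d x y ^ 2 := by
  have hB : ∀ w i, |fderiv ℝ g w (Pi.single i 1)| ≤ Fin.lastCases B₂ (fun _ => B₁) i :=
    fun w i => Fin.lastCases (by simpa using hB₂ w) (fun j => by simpa using hB₁ w j) i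
  have hB₂0 : 0 ≤ B₂ := (abs_nonneg _).trans (hB₂ x)
  calc |g x - g y| ≤ ∑ i, Fin.lastCases B₂ (fun _ => B₁) i * |x i - y i| :=
        abs_sub_le_sum_mul_abs_of_abs_fderiv_single_le hg hB x y
    _ = ∑ i : Fin d, B₁ * |x i.castSucc - y i.castSucc|
          + B₂ * |x (Fin.last d) - y (Fin.last d)| := by
        simp [Fin.sum_univ_castSucc]
    _ ≤ ∑ _i : Fin d, B₁ * dm d x y + B₂ * dm d x y ^ 2 := by
        gcongr with i
        · exact (abs_nonneg _).trans (hB₁ x i)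
        · exact abs_sub_castSucc_le_dm x y i
        · exact abs_sub_last_le_dm_sq x y
    _ = d * B₁ * dm d x y + B₂ * dm d x y ^ 2 := by simp [mul_assoc]

theorem two_rpow_natCast_mul (k : ℕ) (γ : ℝ) : (2:ℝ) ^ ((k:ℝ) * γ) = ((2:ℝ) ^ γ) ^ k := by
  rw [mul_comm, Real.rpow_mul_natCast (by norm_num)]

theorem two_rpow_natCast_mul_le_rpow_neg_of_le_one {D γ : ℝ} {K : ℕ} (hD : 0 < D) (hγ : 0 ≤ γ)
    (hK : 2 ^ K * D ≤ 1) : (2:ℝ) ^ ((K:ℝ) * γ) ≤ D ^ (-γ) := by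
  rw [Real.rpow_natCast_mul (by norm_num), Real.rpow_neg hD.le, ← Real.inv_rpow hD.le]
  exact Real.rpow_le_rpow (by positivity) (by rwa [← one_div, le_div_iff₀ hD]) hγ

theorem two_rpow_natCast_mul_le_rpow_neg_of_one_le {D γ : ℝ} {K : ℕ} (hD : 0 < D) (hγ : γ ≤ 0)
    (hK : 1 ≤ 2 ^ K * D) : (2:ℝ) ^ ((K:ℝ) * γ) ≤ D ^ (-γ) := by
  rw [Real.rpow_natCast_mul (by norm_num), Real.rpow_neg hD.le, ← Real.inv_rpow hD.le]
  exact Real.rpow_le_rpow_of_nonpos (by positivity) ((inv_le_iff_one_le_mul₀ hD).2 hK) hγ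

theorem hasSum_two_rpow_neg_mul {γ : ℝ} (hγ : 0 < γ) :
    HasSum (fun k : ℕ => (2:ℝ) ^ (-(k:ℝ) * γ)) (1 - 2 ^ (-γ))⁻¹ := by
  simp only [neg_mul, ← mul_neg, two_rpow_natCast_mul]
  exact hasSum_geometric_of_lt_one (by positivity)
    (Real.rpow_lt_one_of_one_lt_of_neg one_lt_two (neg_lt_zero.2 hγ))

theorem sum_range_succ_two_rpow_mul_le {γ : ℝ} (hγ : 0 < γ) (K : ℕ) :
    ∑ k ∈ range (K + 1), (2:ℝ) ^ ((k:ℝ) * γ) ≤ (2:ℝ) ^ ((K:ℝ) * γ) * (1 - 2 ^ (-γ))⁻¹ := by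
  have hr : 1 < (2:ℝ) ^ γ := Real.one_lt_rpow one_lt_two hγ
  simp only [two_rpow_natCast_mul, Real.rpow_neg zero_le_two]
  have hc : (1 - ((2:ℝ) ^ γ)⁻¹)⁻¹ = 2 ^ γ / (2 ^ γ - 1) := by
    have : (2:ℝ) ^ γ ≠ 0 := by positivity
    field_simp
  rw [geom_sum_eq hr.ne', pow_succ, hc, mul_div_assoc']
  gcongr
  linarith

theorem sum_range_two_rpow_mul_le {D γ : ℝ} {K : ℕ} (hD : 0 < D) (hγ : 0 < γ)
    (hK : ∀ k < K, 2 ^ k * D < 1) :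
    ∑ k ∈ range K, (2:ℝ) ^ ((k:ℝ) * γ) ≤ (1 - 2 ^ (-γ))⁻¹ * D ^ (-γ) := by
  have hc : 0 ≤ (1 - (2:ℝ) ^ (-γ))⁻¹ := (hasSum_two_rpow_neg_mul hγ).nonneg fun _ => by positivity
  cases K with
  | zero => simpa using mul_nonneg hc (Real.rpow_nonneg hD.le _)
  | succ K =>
    calc ∑ k ∈ range (K + 1), (2:ℝ) ^ ((k:ℝ) * γ)
        ≤ (2:ℝ) ^ ((K:ℝ) * γ) * (1 - 2 ^ (-γ))⁻¹ := sum_range_succ_two_rpow_mul_le hγ K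
      _ ≤ D ^ (-γ) * (1 - 2 ^ (-γ))⁻¹ := by
        gcongr
        exact two_rpow_natCast_mul_le_rpow_neg_of_le_one hD hγ.le (hK K K.lt_succ_self).le
      _ = _ := mul_comm _ _

theorem tsum_two_rpow_neg_mul_nat_add_le {D α : ℝ} {K : ℕ} (hD : 0 < D) (hα : 0 < α)
    (hK : 1 ≤ 2 ^ K * D) :
    ∑' k : ℕ, (2:ℝ) ^ (-((k + K : ℕ) : ℝ) * α) ≤ (1 - 2 ^ (-α))⁻¹ * D ^ α := by
  have hsplit (k : ℕ) :
      (2:ℝ) ^ (-((k + K : ℕ) : ℝ) * α) = 2 ^ ((K:ℝ) * -α) * 2 ^ (-(k:ℝ) * α) := by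
    rw [← Real.rpow_add zero_lt_two]; push_cast; ring_nf
  simp_rw [hsplit]
  rw [tsum_mul_left, (hasSum_two_rpow_neg_mul hα).tsum_eq, mul_comm]
  have hc : 0 ≤ (1 - (2:ℝ) ^ (-α))⁻¹ := (hasSum_two_rpow_neg_mul hα).nonneg fun _ => by positivity
  gcongr
  simpa using two_rpow_natCast_mul_le_rpow_neg_of_one_le hD (neg_nonpos.2 hα.le) hK

theorem abs_le_sum_range_add_tsum_nat_add {h a b : ℕ → ℝ} {s : ℝ} (hs : HasSum h s)
    (ha : ∀ k, |h k| ≤ a k) (hb : ∀ k, |h k| ≤ b k) (hb_sum : Summable b) (K : ℕ) :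
    |s| ≤ ∑ k ∈ range K, a k + ∑' k, b (k + K) := by
  rw [← hs.tsum_eq, ← hs.summable.sum_add_tsum_nat_add K]
  refine (abs_add_le _ _).trans (add_le_add ?_ ?_)
  · exact (abs_sum_le_sum_abs _ _).trans (sum_le_sum fun k _ => ha k)
  · exact tsum_of_norm_bounded ((summable_nat_add_iff K).2 hb_sum).hasSum
      fun k => (Real.norm_eq_abs _).le.trans (hb (k + K))

/-- The sum of the geometric series `∑ₖ 2^{-kγ} = (1 - 2^{-γ})⁻¹` for `γ = α, 1 - α, 2 - α`. -/
noncomputable def dyadicConst (α : ℝ) : ℝ :=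
  (1 - 2 ^ (-α))⁻¹ + (1 - 2 ^ (-(1 - α)))⁻¹ + (1 - 2 ^ (-(2 - α)))⁻¹

theorem dyadicConst_pos {α : ℝ} (hα₀ : 0 < α) (hα₁ : α < 1) : 0 < dyadicConst α := by
  have hterm {γ : ℝ} (hγ : 0 < γ) : 0 < (1 - (2:ℝ) ^ (-γ))⁻¹ :=
    inv_pos.2 (sub_pos.2 (Real.rpow_lt_one_of_one_lt_of_neg one_lt_two (neg_lt_zero.2 hγ)))
  unfold dyadicConst
  linarith [hterm hα₀, hterm (sub_pos.2 hα₁), hterm (show 0 < 2 - α by linarith)]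

theorem abs_le_dyadicConst_mul_rpow {α A D s : ℝ} {h : ℕ → ℝ} (hα₀ : 0 < α) (hα₁ : α < 1)
    (hD : 0 ≤ D) (hs : HasSum h s)
    (hsmall : ∀ k : ℕ, |h k| ≤ A * 2 ^ (-(k:ℝ) * α))
    (hlip : ∀ k : ℕ, |h k| ≤ A * (2 ^ ((k:ℝ) * (1 - α)) * D + 2 ^ ((k:ℝ) * (2 - α)) * D ^ 2)) :
    |s| ≤ A * dyadicConst α * D ^ α := by
  have hA : 0 ≤ A := by simpa using (abs_nonneg _).trans (hsmall 0)
  rcases hD.eq_or_lt with rfl | hD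
  · have hh : h = 0 := funext fun k => abs_nonpos_iff.1 (by simpa using hlip k)
    rw [hh] at hs
    rw [← hasSum_zero.unique hs, abs_zero, Real.zero_rpow hα₀.ne', mul_zero]
  classical
  -- `K` is the first scale with `2^{-K} ≤ D`, so `2^{-K} ≈ D`.
  have hex : ∃ n : ℕ, 1 ≤ 2 ^ n * D := by
    obtain ⟨n, hn⟩ := pow_unbounded_of_one_lt D⁻¹ one_lt_two
    exact ⟨n, (inv_le_iff_one_le_mul₀ hD).1 hn.le⟩
  set K := Nat.find hex
  have hK_lt (k : ℕ) (hk : k < K) : 2 ^ k * D < 1 := not_le.1 (Nat.find_min hex hk)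
  have hD₁ : D * D ^ (-(1 - α)) = D ^ α := by
    rw [← Real.rpow_one_add' hD.le (by linarith)]; ring_nf
  have hD₂ : D ^ 2 * D ^ (-(2 - α)) = D ^ α := by
    rw [← Real.rpow_natCast, ← Real.rpow_add hD]; norm_num
  calc |s| ≤ ∑ k ∈ range K, A * (2 ^ ((k:ℝ) * (1 - α)) * D + 2 ^ ((k:ℝ) * (2 - α)) * D ^ 2)
        + ∑' k, A * 2 ^ (-((k + K : ℕ) : ℝ) * α) :=
        abs_le_sum_range_add_tsum_nat_add hs hlip hsmall
          ((hasSum_two_rpow_neg_mul hα₀).summable.mul_left A) K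
    _ = A * (D * ∑ k ∈ range K, 2 ^ ((k:ℝ) * (1 - α))
          + D ^ 2 * ∑ k ∈ range K, 2 ^ ((k:ℝ) * (2 - α))
          + ∑' k, 2 ^ (-((k + K : ℕ) : ℝ) * α)) := by
        simp only [mul_add, sum_add_distrib, ← mul_sum, ← sum_mul, tsum_mul_left]
        ring
    _ ≤ A * (D * ((1 - 2 ^ (-(1 - α)))⁻¹ * D ^ (-(1 - α)))
          + D ^ 2 * ((1 - 2 ^ (-(2 - α)))⁻¹ * D ^ (-(2 - α)))
          + (1 - 2 ^ (-α))⁻¹ * D ^ α) := by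
        gcongr
        · exact sum_range_two_rpow_mul_le hD (by linarith) hK_lt
        · exact sum_range_two_rpow_mul_le hD (by linarith) hK_lt
        · exact tsum_two_rpow_neg_mul_nat_add_le hD hα₀ (Nat.find_spec hex)
    _ = A * ((1 - 2 ^ (-(1 - α)))⁻¹ * (D * D ^ (-(1 - α)))
          + (1 - 2 ^ (-(2 - α)))⁻¹ * (D ^ 2 * D ^ (-(2 - α))) + (1 - 2 ^ (-α))⁻¹ * D ^ α) := by
        ring
    _ = A * dyadicConst α * D ^ α := by
        rw [hD₁, hD₂, dyadicConst]
        ring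

/-- dyadic characterization of `Γ^α`, sufficiency direction (model case
`0 < α < 1` on `ℝ^{N-1} × ℝ`): if `f = Σ_k f_k` with `‖f_k‖_∞ ≤ C 2^{-kα}`,
`‖∇_{x'} f_k‖_∞ ≤ C 2^{k(1-α)}`, `‖∂_{x_N} f_k‖_∞ ≤ C 2^{k(2-α)}`, then
`|f(x) - f(y)| ≤ C' d(x,y)^α`. -/
theorem dyadic_implies_nonisotropic_holder (d : ℕ) (α C : ℝ)
    (hα0 : 0 < α) (hα1 : α < 1) (hC : 0 ≤ C)
    (f : (Fin (d+1) → ℝ) → ℝ) (fk : ℕ → (Fin (d+1) → ℝ) → ℝ)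
    (hsmooth : ∀ k, ContDiff ℝ 1 (fk k))
    (hsum : ∀ x, HasSum (fun k => fk k x) (f x))
    (h0 : ∀ k x, |fk k x| ≤ C * (2 : ℝ) ^ (-(k : ℝ) * α))
    (h1 : ∀ k x (i : Fin d),
      |fderiv ℝ (fk k) x (Pi.single i.castSucc 1)| ≤ C * (2 : ℝ) ^ ((k : ℝ) * (1 - α)))
    (h2 : ∀ k x,
      |fderiv ℝ (fk k) x (Pi.single (Fin.last d) 1)| ≤ C * (2 : ℝ) ^ ((k : ℝ) * (2 - α))) :
    ∃ C' : ℝ, 0 < C' ∧ ∀ x y, |f x - f y| ≤ C' * (dm d x y) ^ α := by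
  have hM := dyadicConst_pos hα0 hα1
  refine ⟨(d + 2) * C * dyadicConst α + 1, by positivity, fun x y => ?_⟩
  have hsmall (k : ℕ) : |fk k x - fk k y| ≤ (d + 2) * C * 2 ^ (-(k : ℝ) * α) := by
    have h2C : 2 * C ≤ (d + 2) * C := by nlinarith [(d.cast_nonneg : (0:ℝ) ≤ d)]
    calc |fk k x - fk k y| ≤ 2 * C * 2 ^ (-(k : ℝ) * α) := by
          linarith [abs_sub (fk k x) (fk k y), h0 k x, h0 k y]
      _ ≤ (d + 2) * C * 2 ^ (-(k : ℝ) * α) := by gcongr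
  have hlip (k : ℕ) : |fk k x - fk k y| ≤ (d + 2) * C *
      (2 ^ ((k : ℝ) * (1 - α)) * dm d x y + 2 ^ ((k : ℝ) * (2 - α)) * dm d x y ^ 2) := by
    refine (abs_sub_le_dm_of_abs_fderiv_single_le ((hsmooth k).differentiable one_ne_zero)
      (h1 k) (h2 k) x y).trans ?_
    have hD := dm_nonneg d x y
    have hr₁ : 0 ≤ C * (2:ℝ) ^ ((k : ℝ) * (1 - α)) := by positivity
    have hr₂ : 0 ≤ C * (2:ℝ) ^ ((k : ℝ) * (2 - α)) := by positivity
    nlinarith [mul_nonneg hr₁ hD, mul_nonneg (mul_nonneg hr₂ (sq_nonneg (dm d x y))) d.cast_nonneg]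
  calc |f x - f y| ≤ (d + 2) * C * dyadicConst α * dm d x y ^ α :=
        abs_le_dyadicConst_mul_rpow hα0 hα1 (dm_nonneg d x y) ((hsum x).sub (hsum y)) hsmall hlip
    _ ≤ ((d + 2) * C * dyadicConst α + 1) * dm d x y ^ α :=
        mul_le_mul_of_nonneg_right (by linarith) (Real.rpow_nonneg (dm_nonneg d x y) α)
end

section
/- Abstract Hölder-boundedness via dyadic pieces: suppose 𝒯 is linear and for all multiindices with |γ|+|λ| ≤ α+1 one has the operator bounds ‖∂_x^γ X'^λ 𝒯 Q_k^*‖_{L^∞→L^∞} ≤ C 2^{k(2|γ|+|λ|)} and ‖∂_x^γ X'^λ 𝒯 Q_k^* Q_l^*‖_{L^∞→L^∞} ≤ C_M 2^{-M(k-l)} 2^{l(2|γ|+|λ|)} for k ≥ l and every M ≥ 0; suppose also f ∈ Γ^α (with ‖f‖_{Γ^α} ≤ 1) satisfies ‖Q_m f‖_∞ ≤ C2^{-mα} and ‖Q_l^* Q_m f‖_∞ ≤ C_M 2^{-M(l-m)}2^{-mα} for l ≥ m. Then 𝒯 f = Σ_k F_k with F_k = 𝒯 Q_k^* f satisfying ‖∂_x^γ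 X'^λ F_k‖_∞ ≤ C' 2^{k(2|γ|+|λ|-α)}, and hence 𝒯 f ∈ Γ^α. -/
open scoped BigOperators

/-- Directional derivative of a scalar function along the vector `v`. -/
noncomputable def pderiv' {V : Type*} [NormedAddCommGroup V] [NormedSpace ℝ V]
    (v : V) (f : V → ℝ) : V → ℝ := fun x => fderiv ℝ f x v

/-- Iterated directional derivatives along a list of directions. -/
noncomputable def pderivList {V : Type*} [NormedAddCommGroup V] [NormedSpace ℝ V]
    (L : List V) (f : V → ℝ) : V → ℝ := L.foldr pderiv' f

/-- The mixed derivative `∂_x^γ X'^λ` in the model case, where the good derivatives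
`X'` are the coordinate derivatives in the first `d` variables. -/
noncomputable def Dop (d : ℕ) (γ : List (Fin (d+1))) (lam : List (Fin d))
    (g : (Fin (d+1) → ℝ) → ℝ) : (Fin (d+1) → ℝ) → ℝ :=
  pderivList (γ.map (fun i => (Pi.single i 1 : Fin (d+1) → ℝ)) ++
    lam.map (fun i => (Pi.single i.castSucc 1 : Fin (d+1) → ℝ))) g

private lemma geom_summable {c : ℝ} (hc : 0 < c) :
    Summable (fun n : ℕ => (2:ℝ) ^ (-c * (n:ℝ))) := by
  have h : ∀ n : ℕ, (2:ℝ) ^ (-c * (n:ℝ)) = ((2:ℝ) ^ (-c)) ^ n := by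
    intro n
    rw [← Real.rpow_natCast ((2:ℝ) ^ (-c)) n, ← Real.rpow_mul (by norm_num)]
  rw [funext h]
  exact summable_geometric_of_lt_one (by positivity)
    (Real.rpow_lt_one_of_one_lt_of_neg one_lt_two (by linarith))

private lemma geom_tsum_eq {c : ℝ} (hc : 0 < c) :
    ∑' n : ℕ, (2:ℝ) ^ (-c * (n:ℝ)) = (1 - (2:ℝ) ^ (-c))⁻¹ := by
  have h : ∀ n : ℕ, (2:ℝ) ^ (-c * (n:ℝ)) = ((2:ℝ) ^ (-c)) ^ n := by
    intro n
    rw [← Real.rpow_natCast ((2:ℝ) ^ (-c)) n, ← Real.rpow_mul (by norm_num)]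
  rw [funext h]
  exact tsum_geometric_of_lt_one (by positivity)
    (Real.rpow_lt_one_of_one_lt_of_neg one_lt_two (by linarith))

private lemma geom_tsum_le {c : ℝ} (hc : 1 ≤ c) :
    ∑' n : ℕ, (2:ℝ) ^ (-c * (n:ℝ)) ≤ 2 := by
  rw [geom_tsum_eq (by linarith)]
  have h1 : (2:ℝ) ^ (-c) ≤ (2:ℝ) ^ (-(1:ℝ)) :=
    Real.rpow_le_rpow_of_exponent_le one_le_two (by linarith)
  have h2 : (2:ℝ) ^ (-(1:ℝ)) = 1/2 := by rw [Real.rpow_neg_one]; norm_num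
  rw [h2] at h1
  calc (1 - (2:ℝ)^(-c))⁻¹ ≤ ((1:ℝ)/2)⁻¹ := inv_anti₀ (by norm_num) (by linarith)
    _ = 2 := by norm_num

private lemma geom_sum_le {c : ℝ} (hc : 1 ≤ c) (n : ℕ) :
    ∑ j ∈ Finset.range n, (2:ℝ) ^ (-c * (j:ℝ)) ≤ 2 := by
  calc ∑ j ∈ Finset.range n, (2:ℝ) ^ (-c * (j:ℝ))
      ≤ ∑' j : ℕ, (2:ℝ) ^ (-c * (j:ℝ)) :=
        Summable.sum_le_tsum _ (fun i _ => by positivity) (geom_summable (by linarith))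
    _ ≤ 2 := geom_tsum_le hc

/-- monotone comparison of `const * 2^exponent` expressions -/
private lemma crle {u v a b : ℝ} (huv : u ≤ v) (hv : 0 ≤ v) (hab : a ≤ b) :
    u * (2:ℝ) ^ a ≤ v * (2:ℝ) ^ b :=
  mul_le_mul huv (Real.rpow_le_rpow_of_exponent_le one_le_two hab) (by positivity) hv


set_option maxHeartbeats 2000000 in
/-- abstract Hölder-boundedness via dyadic pieces. Under the operator
bounds on `𝒯 Q_k^*` and `𝒯 Q_k^* Q_l^*`, and the bounds `‖Q_m f‖_∞ ≤ C 2^{-mα}`,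
`‖Q_l^* Q_m f‖_∞ ≤ C_M 2^{-M(l-m)} 2^{-mα}` (`l ≥ m`) for `f ∈ Γ^α`, the pieces
`F_k = 𝒯 Q_k^* f` satisfy `‖∂_x^γ X'^λ F_k‖_∞ ≤ C' 2^{k(2|γ|+|λ|-α)}`, and `𝒯 f = Σ_k F_k`,
so that `𝒯 f ∈ Γ^α`. -/
theorem abstract_holder_boundedness (d : ℕ) (α : ℝ) (hα : 0 < α)
    (𝒯 : ((Fin (d+1) → ℝ) → ℝ) → (Fin (d+1) → ℝ) → ℝ)
    (QS QQ : ℕ → ((Fin (d+1) → ℝ) → ℝ) → (Fin (d+1) → ℝ) → ℝ)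
    (f : (Fin (d+1) → ℝ) → ℝ) (C : ℝ) (hC : 0 < C)
    -- operator bound on `∂_x^γ X'^λ 𝒯 Q_k^*`
    (hTQ : ∀ (γ : List (Fin (d+1))) (lam : List (Fin d)),
      (2 * γ.length + lam.length : ℝ) ≤ α + 1 →
      ∀ (k : ℕ) (g : (Fin (d+1) → ℝ) → ℝ) (B : ℝ), (∀ x, |g x| ≤ B) →
      ∀ x, |Dop d γ lam (𝒯 (QS k g)) x| ≤
        C * (2 : ℝ) ^ ((k : ℝ) * (2 * γ.length + lam.length)) * B)
    -- operator bound on `∂_x^γ X'^λ 𝒯 Q_k^* Q_l^*`, `k ≥ l`, with gain `2^{-M(k-l)}`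
    (hTQQ : ∀ M : ℕ, ∃ CM : ℝ, ∀ (γ : List (Fin (d+1))) (lam : List (Fin d)),
      (2 * γ.length + lam.length : ℝ) ≤ α + 1 →
      ∀ (k l : ℕ), l ≤ k → ∀ (g : (Fin (d+1) → ℝ) → ℝ) (B : ℝ), (∀ x, |g x| ≤ B) →
      ∀ x, |Dop d γ lam (𝒯 (QS k (QS l g))) x| ≤
        CM * (2 : ℝ) ^ (-(M : ℝ) * ((k : ℝ) - (l : ℝ))) *
          (2 : ℝ) ^ ((l : ℝ) * (2 * γ.length + lam.length)) * B)
    -- bounds on the dyadic pieces of `f ∈ Γ^α`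
    (hQf : ∀ (m : ℕ) (x), |QQ m f x| ≤ C * (2 : ℝ) ^ (-(m : ℝ) * α))
    (hQQf : ∀ M : ℕ, ∃ CM : ℝ, ∀ (l m : ℕ), m ≤ l → ∀ x,
      |QS l (QQ m f) x| ≤ CM * (2 : ℝ) ^ (-(M : ℝ) * ((l : ℝ) - (m : ℝ))) *
        (2 : ℝ) ^ (-(m : ℝ) * α))
    -- termwise expansions `𝒯 Q_k^* f = Σ_m 𝒯 Q_k^* Q_m f = Σ_m Σ_l 𝒯 Q_k^* Q_l^* Q_m f`
    (hexp1 : ∀ (γ : List (Fin (d+1))) (lam : List (Fin d)) (k : ℕ) (x),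
      Dop d γ lam (𝒯 (QS k f)) x = ∑' m : ℕ, Dop d γ lam (𝒯 (QS k (QQ m f))) x)
    (hexp2 : ∀ (γ : List (Fin (d+1))) (lam : List (Fin d)) (k m : ℕ) (x),
      Dop d γ lam (𝒯 (QS k (QQ m f))) x =
        ∑' l : ℕ, Dop d γ lam (𝒯 (QS k (QS l (QQ m f)))) x)
    -- `𝒯 f = Σ_k F_k`
    (hsum : ∀ x, HasSum (fun k => 𝒯 (QS k f) x) (𝒯 f x)) :
    ∃ C' : ℝ, 0 < C' ∧ ∀ (γ : List (Fin (d+1))) (lam : List (Fin d)),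
      (2 * γ.length + lam.length : ℝ) ≤ α + 1 → ∀ (k : ℕ) (x),
      |Dop d γ lam (𝒯 (QS k f)) x| ≤
        C' * (2 : ℝ) ^ ((k : ℝ) * (2 * γ.length + lam.length - α)) := by
  -- choose the gain exponent and constants
  obtain ⟨P, hPα⟩ : ∃ P : ℕ, α + 2 ≤ (P:ℝ) :=
    ⟨⌈α⌉₊ + 2, by push_cast; linarith [Nat.le_ceil α]⟩
  have hP1 : (1:ℝ) ≤ (P:ℝ) := by linarith
  obtain ⟨C₁, hC₁⟩ := hTQQ (4*P)
  obtain ⟨C₂, hC₂⟩ := hQQf (4*P)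
  set D₁ : ℝ := max C₁ 1 with hD₁def
  set D₂ : ℝ := max C₂ 1 with hD₂def
  have hD₁pos : (0:ℝ) < D₁ := lt_of_lt_of_le one_pos (le_max_right _ _)
  have hD₂pos : (0:ℝ) < D₂ := lt_of_lt_of_le one_pos (le_max_right _ _)
  set K₁ : ℝ := 2*C*D₁ + 2*C*D₂ with hK₁def
  have hK₁pos : 0 < K₁ := by positivity
  have h2α : (2:ℝ)^(-α) < 1 := Real.rpow_lt_one_of_one_lt_of_neg one_lt_two (by linarith)
  set Eα : ℝ := (1 - (2:ℝ)^(-α))⁻¹ with hEαdef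
  have hEαpos : 0 < Eα := by
    have : (0:ℝ) < 1 - (2:ℝ)^(-α) := by linarith
    positivity
  refine ⟨2*K₁ + C*C*Eα, by positivity, ?_⟩
  intro γ lam hs k x
  set s : ℝ := 2 * (γ.length:ℝ) + (lam.length:ℝ) with hsdef
  have hs0 : 0 ≤ s := by positivity
  have hsP : s ≤ (P:ℝ) - 1 := by linarith
  -- Step 1 : bound on each piece with m ≤ k
  have key1 : ∀ m : ℕ, m ≤ k →
      |Dop d γ lam (𝒯 (QS k (QQ m f))) x| ≤
        K₁ * (2:ℝ) ^ ((k:ℝ)*s - (m:ℝ)*α - (P:ℝ)*((k:ℝ)-(m:ℝ))) := by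
    intro m hm
    set l₀ : ℕ := (k+m)/2 with hl₀def
    have hl₀k : l₀ ≤ k := by omega
    have hml₀ : m ≤ l₀ := by omega
    have h2l₀ : 2*l₀ ≤ k+m := by omega
    have h2l₀' : k+m ≤ 2*l₀+1 := by omega
    have hmk : (m:ℝ) ≤ (k:ℝ) := Nat.cast_le.2 hm
    have hl₀kr : (l₀:ℝ) ≤ (k:ℝ) := Nat.cast_le.2 hl₀k
    have hml₀r : (m:ℝ) ≤ (l₀:ℝ) := Nat.cast_le.2 hml₀
    have h2l₀r : 2*(l₀:ℝ) ≤ (k:ℝ)+(m:ℝ) := by exact_mod_cast h2l₀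
    have h2l₀r' : (k:ℝ)+(m:ℝ) ≤ 2*(l₀:ℝ)+1 := by exact_mod_cast h2l₀'
    set W : ℝ := (k:ℝ)*s - (m:ℝ)*α - (P:ℝ)*((k:ℝ)-(m:ℝ)) with hWdef
    set KA : ℝ := C * D₁ * (2:ℝ)^W with hKAdef
    set KB : ℝ := C * D₂ * (2:ℝ)^W with hKBdef
    have hKA0 : 0 ≤ KA := by positivity
    have hKB0 : 0 ≤ KB := by positivity
    set h : ℕ → ℝ := fun l =>
      if l ≤ l₀ then KA * (2:ℝ)^(-(1:ℝ)*((l₀:ℝ) - (l:ℝ)))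
      else KB * (2:ℝ)^(-(1:ℝ)*((l:ℝ) - (l₀:ℝ) - 1)) with hhdef
    have htail : ∀ j : ℕ, h (j + (l₀+1)) = KB * (2:ℝ)^(-(1:ℝ)*(j:ℝ)) := by
      intro j
      simp only [hhdef]
      rw [if_neg (by omega)]
      congr 2
      push_cast
      ring
    have hsummable : Summable h := by
      rw [← summable_nat_add_iff (l₀+1)]
      rw [funext htail]
      exact (geom_summable one_pos).mul_left _
    -- termwise bound
    have hbound : ∀ l : ℕ, ‖Dop d γ lam (𝒯 (QS k (QS l (QQ m f)))) x‖ ≤ h l := by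
      intro l
      rw [Real.norm_eq_abs]; simp only [hhdef]
      by_cases hl : l ≤ l₀
      · rw [if_pos hl]
        have hlk : l ≤ k := le_trans hl hl₀k
        have hlkr : (l:ℝ) ≤ (k:ℝ) := Nat.cast_le.2 hlk
        have hll₀r : (l:ℝ) ≤ (l₀:ℝ) := Nat.cast_le.2 hl
        have h1 := hC₁ γ lam hs k l hlk (QQ m f) (C * (2:ℝ)^(-(m:ℝ)*α)) (hQf m) x
        refine h1.trans ?_
        have e1 : C₁ * (2:ℝ)^(-((4*P:ℕ):ℝ)*((k:ℝ)-(l:ℝ))) * (2:ℝ)^((l:ℝ)*s) *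
            (C * (2:ℝ)^(-(m:ℝ)*α)) =
            (C₁ * C) * (2:ℝ)^((-((4*P:ℕ):ℝ)*((k:ℝ)-(l:ℝ)) + (l:ℝ)*s) + (-(m:ℝ)*α)) := by
          rw [Real.rpow_add two_pos, Real.rpow_add two_pos]; ring
        have e2 : KA * (2:ℝ)^(-(1:ℝ)*((l₀:ℝ)-(l:ℝ))) =
            (C * D₁) * (2:ℝ)^(W + (-(1:ℝ)*((l₀:ℝ)-(l:ℝ)))) := by
          rw [hKAdef, Real.rpow_add two_pos]; ring
        rw [e1, e2]
        apply crle
        · calc C₁ * C ≤ D₁ * C := by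
                apply mul_le_mul_of_nonneg_right (le_max_left _ _) hC.le
            _ = C * D₁ := by ring
        · positivity
        · rw [hWdef]
          push_cast
          nlinarith [mul_le_mul_of_nonneg_right hsP (sub_nonneg.2 hlkr),
            mul_le_mul_of_nonneg_left (sub_nonneg.2 hll₀r) (by linarith : (0:ℝ) ≤ (P:ℝ)),
            mul_le_mul_of_nonneg_left (by linarith : (k:ℝ)-(m:ℝ) ≤ 2*((k:ℝ)-(l₀:ℝ)))
              (by linarith : (0:ℝ) ≤ (P:ℝ)),
            mul_le_mul_of_nonneg_right hP1 (sub_nonneg.2 hll₀r),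
            mul_le_mul_of_nonneg_left (sub_nonneg.2 hll₀r) (by linarith : (0:ℝ) ≤ (P:ℝ) - 1)]
      · rw [if_neg hl]
        have hml : m ≤ l := by omega
        have hmlr : (m:ℝ) ≤ (l:ℝ) := Nat.cast_le.2 hml
        have hl₀lr : (l₀:ℝ) + 1 ≤ (l:ℝ) := by exact_mod_cast (by omega : l₀ + 1 ≤ l)
        have hB : ∀ y, |QS l (QQ m f) y| ≤
            C₂ * (2:ℝ)^(-((4*P:ℕ):ℝ)*((l:ℝ)-(m:ℝ))) * (2:ℝ)^(-(m:ℝ)*α) :=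
          fun y => hC₂ l m hml y
        have h1 := hTQ γ lam hs k (QS l (QQ m f))
          (C₂ * (2:ℝ)^(-((4*P:ℕ):ℝ)*((l:ℝ)-(m:ℝ))) * (2:ℝ)^(-(m:ℝ)*α)) hB x
        refine h1.trans ?_
        have e1 : C * (2:ℝ)^((k:ℝ)*s) *
            (C₂ * (2:ℝ)^(-((4*P:ℕ):ℝ)*((l:ℝ)-(m:ℝ))) * (2:ℝ)^(-(m:ℝ)*α)) =
            (C * C₂) * (2:ℝ)^(((k:ℝ)*s + -((4*P:ℕ):ℝ)*((l:ℝ)-(m:ℝ))) + (-(m:ℝ)*α)) := by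
          rw [Real.rpow_add two_pos, Real.rpow_add two_pos]; ring
        have e2 : KB * (2:ℝ)^(-(1:ℝ)*((l:ℝ)-(l₀:ℝ)-1)) =
            (C * D₂) * (2:ℝ)^(W + (-(1:ℝ)*((l:ℝ)-(l₀:ℝ)-1))) := by
          rw [hKBdef, Real.rpow_add two_pos]; ring
        rw [e1, e2]
        apply crle
        · exact mul_le_mul_of_nonneg_left (le_max_left _ _) hC.le
        · positivity
        · rw [hWdef]
          push_cast
          nlinarith [mul_le_mul_of_nonneg_left
              (by linarith : (k:ℝ)-(m:ℝ) ≤ 2*((l:ℝ)-(m:ℝ))) (by linarith : (0:ℝ) ≤ (P:ℝ)),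
            mul_le_mul_of_nonneg_right hP1 (by linarith : (0:ℝ) ≤ (l:ℝ)-(m:ℝ)),
            mul_le_mul_of_nonneg_left (by linarith : (0:ℝ) ≤ (l:ℝ)-(m:ℝ))
              (by linarith : (0:ℝ) ≤ (P:ℝ))]
    -- assemble the l-sum
    rw [hexp2 γ lam k m x, ← Real.norm_eq_abs]
    refine (tsum_of_norm_bounded hsummable.hasSum hbound).trans ?_
    have hsplit := Summable.sum_add_tsum_nat_add (f := h) (l₀+1) hsummable
    rw [← hsplit]
    have hfin : ∑ l ∈ Finset.range (l₀+1), h l ≤ 2 * KA := by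
      have hrefl := Finset.sum_range_reflect h (l₀+1)
      have heq : ∀ j ∈ Finset.range (l₀+1), h (l₀+1-1-j) = KA * (2:ℝ)^(-(1:ℝ)*(j:ℝ)) := by
        intro j hj
        have hj' : j ≤ l₀ := by
          have := Finset.mem_range.1 hj; omega
        have hnat : l₀+1-1-j = l₀ - j := by omega
        rw [hnat]; simp only [hhdef]
        rw [if_pos (by omega)]
        congr 2
        rw [Nat.cast_sub hj']
        ring
      calc ∑ l ∈ Finset.range (l₀+1), h l
          = ∑ j ∈ Finset.range (l₀+1), h (l₀+1-1-j) := hrefl.symm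
        _ = ∑ j ∈ Finset.range (l₀+1), KA * (2:ℝ)^(-(1:ℝ)*(j:ℝ)) :=
            Finset.sum_congr rfl heq
        _ = KA * ∑ j ∈ Finset.range (l₀+1), (2:ℝ)^(-(1:ℝ)*(j:ℝ)) := by
            rw [Finset.mul_sum]
        _ ≤ KA * 2 := by
            exact mul_le_mul_of_nonneg_left (geom_sum_le le_rfl _) hKA0
        _ = 2 * KA := by ring
    have htailsum : ∑' j : ℕ, h (j + (l₀+1)) ≤ 2 * KB := by
      rw [funext htail, tsum_mul_left]
      calc KB * ∑' j : ℕ, (2:ℝ)^(-(1:ℝ)*(j:ℝ)) ≤ KB * 2 :=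
            mul_le_mul_of_nonneg_left (geom_tsum_le le_rfl) hKB0
        _ = 2 * KB := by ring
    calc ∑ l ∈ Finset.range (l₀+1), h l + ∑' j : ℕ, h (j + (l₀+1))
        ≤ 2 * KA + 2 * KB := add_le_add hfin htailsum
      _ = K₁ * (2:ℝ)^W := by rw [hKAdef, hKBdef, hK₁def]; ring
  -- Step 2 : sum over m
  set h₂ : ℕ → ℝ := fun m =>
    if m ≤ k then K₁ * (2:ℝ)^((k:ℝ)*s - (m:ℝ)*α - (P:ℝ)*((k:ℝ)-(m:ℝ)))
    else (C*C) * (2:ℝ)^((k:ℝ)*s - (m:ℝ)*α) with hh₂def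
  have htail₂ : ∀ j : ℕ, h₂ (j + (k+1)) =
      ((C*C) * (2:ℝ)^((k:ℝ)*s - (k:ℝ)*α - α)) * (2:ℝ)^(-α*(j:ℝ)) := by
    intro j
    simp only [hh₂def]
    rw [if_neg (by omega)]
    have he : (k:ℝ)*s - ((j + (k+1):ℕ):ℝ)*α = ((k:ℝ)*s - (k:ℝ)*α - α) + (-α*(j:ℝ)) := by
      push_cast; ring
    rw [he, Real.rpow_add two_pos]
    ring
  have hsummable₂ : Summable h₂ := by
    rw [← summable_nat_add_iff (k+1)]
    rw [funext htail₂]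
    exact (geom_summable hα).mul_left _
  have hbound₂ : ∀ m : ℕ, ‖Dop d γ lam (𝒯 (QS k (QQ m f))) x‖ ≤ h₂ m := by
    intro m
    rw [Real.norm_eq_abs]; simp only [hh₂def]
    by_cases hm : m ≤ k
    · rw [if_pos hm]; exact key1 m hm
    · rw [if_neg hm]
      have h1 := hTQ γ lam hs k (QQ m f) (C * (2:ℝ)^(-(m:ℝ)*α)) (hQf m) x
      refine h1.trans (le_of_eq ?_)
      have he : (k:ℝ)*s - (m:ℝ)*α = (k:ℝ)*(2 * (γ.length:ℝ) + (lam.length:ℝ)) + (-(m:ℝ)*α) := by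
        rw [hsdef]; ring
      rw [he, Real.rpow_add two_pos]
      ring
  rw [hexp1 γ lam k x, ← Real.norm_eq_abs]
  refine (tsum_of_norm_bounded hsummable₂.hasSum hbound₂).trans ?_
  rw [← Summable.sum_add_tsum_nat_add (f := h₂) (k+1) hsummable₂]
  have hfin₂ : ∑ m ∈ Finset.range (k+1), h₂ m ≤
      2 * K₁ * (2:ℝ)^((k:ℝ)*(s - α)) := by
    have hstep : ∀ m ∈ Finset.range (k+1), h₂ m ≤
        (K₁ * (2:ℝ)^((k:ℝ)*(s-α))) * (2:ℝ)^(-(1:ℝ)*((k:ℝ)-(m:ℝ))) := by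
      intro m hm
      have hmk : m ≤ k := by have := Finset.mem_range.1 hm; omega
      have hmkr : (m:ℝ) ≤ (k:ℝ) := Nat.cast_le.2 hmk
      simp only [hh₂def]
      rw [if_pos hmk]
      rw [mul_assoc, ← Real.rpow_add two_pos]
      apply mul_le_mul_of_nonneg_left _ hK₁pos.le
      apply Real.rpow_le_rpow_of_exponent_le one_le_two
      nlinarith [mul_le_mul_of_nonneg_right (by linarith : α + 1 ≤ (P:ℝ))
        (sub_nonneg.2 hmkr)]
    have hrefl : ∑ m ∈ Finset.range (k+1), (2:ℝ)^(-(1:ℝ)*((k:ℝ)-(m:ℝ))) ≤ 2 := by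
      have hcongr : ∀ j ∈ Finset.range (k+1),
          (2:ℝ)^(-(1:ℝ)*((k:ℝ)-((k+1-1-j:ℕ):ℝ))) = (2:ℝ)^(-(1:ℝ)*(j:ℝ)) := by
        intro j hj
        have hj' : j ≤ k := by have := Finset.mem_range.1 hj; omega
        congr 1
        have hnat : k+1-1-j = k - j := by omega
        rw [hnat, Nat.cast_sub hj']
        ring
      calc ∑ m ∈ Finset.range (k+1), (2:ℝ)^(-(1:ℝ)*((k:ℝ)-(m:ℝ)))
          = ∑ j ∈ Finset.range (k+1), (2:ℝ)^(-(1:ℝ)*((k:ℝ)-((k+1-1-j:ℕ):ℝ))) :=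
            (Finset.sum_range_reflect _ (k+1)).symm
        _ = ∑ j ∈ Finset.range (k+1), (2:ℝ)^(-(1:ℝ)*(j:ℝ)) := Finset.sum_congr rfl hcongr
        _ ≤ 2 := geom_sum_le le_rfl _
    calc ∑ m ∈ Finset.range (k+1), h₂ m
        ≤ ∑ m ∈ Finset.range (k+1),
            (K₁ * (2:ℝ)^((k:ℝ)*(s-α))) * (2:ℝ)^(-(1:ℝ)*((k:ℝ)-(m:ℝ))) :=
          Finset.sum_le_sum hstep
      _ = (K₁ * (2:ℝ)^((k:ℝ)*(s-α))) *
            ∑ m ∈ Finset.range (k+1), (2:ℝ)^(-(1:ℝ)*((k:ℝ)-(m:ℝ))) := by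
          rw [Finset.mul_sum]
      _ ≤ (K₁ * (2:ℝ)^((k:ℝ)*(s-α))) * 2 :=
          mul_le_mul_of_nonneg_left hrefl (by positivity)
      _ = 2 * K₁ * (2:ℝ)^((k:ℝ)*(s - α)) := by ring
  have htailsum₂ : ∑' j : ℕ, h₂ (j + (k+1)) ≤ (C*C*Eα) * (2:ℝ)^((k:ℝ)*(s-α)) := by
    rw [funext htail₂, tsum_mul_left, geom_tsum_eq hα, ← hEαdef]
    have hexp : (2:ℝ)^((k:ℝ)*s - (k:ℝ)*α - α) ≤ (2:ℝ)^((k:ℝ)*(s-α)) := by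
      apply Real.rpow_le_rpow_of_exponent_le one_le_two
      nlinarith
    calc (C*C) * (2:ℝ)^((k:ℝ)*s - (k:ℝ)*α - α) * Eα
        ≤ (C*C) * (2:ℝ)^((k:ℝ)*(s-α)) * Eα := by
          apply mul_le_mul_of_nonneg_right _ hEαpos.le
          exact mul_le_mul_of_nonneg_left hexp (by positivity)
      _ = (C*C*Eα) * (2:ℝ)^((k:ℝ)*(s-α)) := by ring
  have hfinal : (2:ℝ)^((k:ℝ)*(s-α)) = (2:ℝ)^((k:ℝ)*(2 * (γ.length:ℝ) + (lam.length:ℝ) - α)) := by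
    rw [hsdef]
  calc ∑ m ∈ Finset.range (k+1), h₂ m + ∑' j : ℕ, h₂ (j + (k+1))
      ≤ 2 * K₁ * (2:ℝ)^((k:ℝ)*(s - α)) + (C*C*Eα) * (2:ℝ)^((k:ℝ)*(s-α)) :=
        add_le_add hfin₂ htailsum₂
    _ = (2*K₁ + C*C*Eα) * (2:ℝ)^((k:ℝ)*(s-α)) := by ring
    _ = (2*K₁ + C*C*Eα) * (2:ℝ)^((k:ℝ)*(2 * (γ.length:ℝ) + (lam.length:ℝ) - α)) := by
        rw [hfinal]
end
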